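/- arXiv:2601.09505 — 2 statements merged into one kernel-verified Lean document; each statement's English description precedes it below -/
import Mathlib

section
/- A disjoint union f ⊔ g of two monomorphisms of simplicial sets is an extension by a set if and only if both f and g are extensions by a set. -/
open CategoryTheory CategoryTheory.Limits Simplicial

noncomputable section

namespace Paper

/-- The constant map from `X` to `Δ[1]` at the vertex `k`. -/
def constMap (X : SSet.{0}) (k : Fin 2) : X ⟶ Δ[1] where
  app m := ↾fun _ => SSet.stdSimplex.const 1 k m
  naturality := by
    intro m m' g
    ext x
    apply ULift.ext
    apply SimplexCategory.Hom.ext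
    ext i
    rfl

/-- The two inclusions of `X` into the cylinder `X ⨯ Δ[1]`. -/
def cylIncl (X : SSet.{0}) (k : Fin 2) : X ⟶ X ⨯ Δ[1] :=
  prod.lift (𝟙 X) (constMap X k)

/-- Simplicial homotopy between two maps `X ⟶ K`. -/
def SHomotopic {X K : SSet.{0}} (u v : X ⟶ K) : Prop :=
  ∃ H : X ⨯ Δ[1] ⟶ K, cylIncl X 0 ≫ H = u ∧ cylIncl X 1 ≫ H = v

/-- A map of simplicial sets is a weak homotopy equivalence iff it induces a
bijection on homotopy classes of maps into every Kan complex. -/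
def IsWeakEquiv {X Y : SSet.{0}} (f : X ⟶ Y) : Prop :=
  ∀ (K : SSet.{0}), SSet.KanComplex K →
    ((∀ u : X ⟶ K, ∃ v : Y ⟶ K, SHomotopic (f ≫ v) u) ∧
     (∀ v w : Y ⟶ K, SHomotopic (f ≫ v) (f ≫ w) → SHomotopic v w))

/-- The edge relation on vertices of a simplicial set. -/
def edgeRel (X : SSet.{0}) (x y : X _⦋0⦌) : Prop :=
  ∃ e : X _⦋1⦌, X.δ 1 e = x ∧ X.δ 0 e = y

/-- The set of connected components of a simplicial set. -/
def π₀ (X : SSet.{0}) : Type := Quot (edgeRel X)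

/-- Functoriality of `π₀`. -/
def π₀Map {X Y : SSet.{0}} (f : X ⟶ Y) : π₀ X → π₀ Y :=
  Quot.map (f.app _) (by
    rintro x y ⟨e, hx, hy⟩
    refine ⟨f.app _ e, ?_, ?_⟩ <;>
      simp [← hx, ← hy, SimplicialObject.δ, FunctorToTypes.naturality])

/-- The discrete simplicial set on a set `R`. -/
def disc (R : Type) : SSet.{0} := (Functor.const _).obj R

/-- A monomorphism of simplicial sets `f : X ⟶ Y` is an extension by a set if there is
a set `R` and a weak homotopy equivalence `X ⨿ R ⟶ Y` extending `f`. -/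
def IsExtensionBySet {X Y : SSet.{0}} (f : X ⟶ Y) : Prop :=
  ∃ (R : Type) (g : disc R ⟶ Y), IsWeakEquiv (coprod.desc f g)


/-!
A map `disc R ⟶ Y ⨿ W` sends each point of `R` into one of the two summands, so `R = R₁ ⊔ R₂`
and, up to an isomorphism of sources, `(X ⨿ Z) ⨿ disc R ⟶ Y ⨿ W` is the coproduct of
`X ⨿ disc R₁ ⟶ Y` and `Z ⨿ disc R₂ ⟶ W`; two extensions by sets combine in the same way.
It remains to see that `e₁ ⨿ e₂` is a weak equivalence iff `e₁` and `e₂` are. Homotopies glue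
along coproducts, because `- ⨯ Δ[1]` preserves them. Conversely, a map from the source of `e₁` to
a Kan complex `K` extends over the other summand by a constant map at a vertex of `K`. If `K` has
no vertex, the source of `e₁` is empty, and then so is its target: otherwise the two maps to the
discrete Kan complex `disc Bool` that differ only on that target would be homotopic.
-/

open Opposite
open SSet hiding yonedaEquiv

universe u v

section Coproducts

variable {C : Type u} [Category.{v} C]

/-- `(A ⨿ B) ⨯ T` is the pullback of `A ⨿ B` along `prod.fst`, and coproducts are universal. -/
def isColimitBinaryCofanProdMap [FinitaryPreExtensive C] [HasBinaryProducts C] (A B T : C) :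
    IsColimit (BinaryCofan.mk (prod.map (coprod.inl : A ⟶ A ⨿ B) (𝟙 T))
      (prod.map (coprod.inr : B ⟶ A ⨿ B) (𝟙 T))) :=
  (FinitaryPreExtensive.universal' _ (coprodIsCoprod A B) _ (mapPair prod.fst prod.fst)
    prod.fst (by ext ⟨⟨⟩⟩ <;> exact (prod.map_fst _ _).symm) (.of_discrete _) (by
      rintro ⟨⟨⟩⟩ <;> exact (IsPullback.of_prod_fst_with_id _ T).flip)).some

variable [HasBinaryCoproducts C]

def coprodInterchange (A B D E : C) : (A ⨿ B) ⨿ (D ⨿ E) ≅ (A ⨿ D) ⨿ (B ⨿ E) where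
  hom := coprod.desc (coprod.map coprod.inl coprod.inl) (coprod.map coprod.inr coprod.inr)
  inv := coprod.desc (coprod.map coprod.inl coprod.inl) (coprod.map coprod.inr coprod.inr)
  hom_inv_id := by
    ext : 2 <;> simp only [coprod.inl_desc_assoc, coprod.inr_desc_assoc, coprod.inl_map_assoc,
      coprod.inr_map_assoc, coprod.inl_desc, coprod.inr_desc, coprod.inl_map, coprod.inr_map,
      Category.comp_id]
  inv_hom_id := by
    ext : 2 <;> simp only [coprod.inl_desc_assoc, coprod.inr_desc_assoc, coprod.inl_map_assoc,
      coprod.inr_map_assoc, coprod.inl_desc, coprod.inr_desc, coprod.inl_map, coprod.inr_map,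
      Category.comp_id]

lemma coprod_desc_map_map {A B D E Y W : C} (f : A ⟶ Y) (g : B ⟶ W) (f' : D ⟶ Y)
    (g' : E ⟶ W) :
    coprod.desc (coprod.map f g) (coprod.map f' g') =
      (coprodInterchange A B D E).hom ≫ coprod.map (coprod.desc f f') (coprod.desc g g') := by
  ext : 2 <;> simp only [coprodInterchange, coprod.inl_desc_assoc, coprod.inr_desc_assoc,
    coprod.inl_map_assoc, coprod.inr_map_assoc, coprod.inl_desc, coprod.inr_desc, coprod.inl_map,
    coprod.inr_map]

lemma coprod_desc_inl_comp_inr_comp {A B Y : C} (u : A ⨿ B ⟶ Y) :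
    coprod.desc (coprod.inl ≫ u) (coprod.inr ≫ u) = u := by
  rw [← coprod.desc_comp, coprod.desc_inl_inr, Category.id_comp]

end Coproducts

section Homotopy

variable {P Q K : SSet.{0}}

lemma comp_constMap (u : P ⟶ Q) (k : Fin 2) : u ≫ constMap Q k = constMap P k := rfl

lemma cylIncl_comp_prodMap (u : P ⟶ Q) (k : Fin 2) :
    cylIncl P k ≫ prod.map u (𝟙 Δ[1]) = u ≫ cylIncl Q k := by
  simp [cylIncl, prod.lift_map, prod.comp_lift, comp_constMap]

lemma SHomotopic.refl (u : P ⟶ K) : SHomotopic u u :=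
  ⟨prod.fst ≫ u, by rw [cylIncl, prod.lift_fst_assoc, Category.id_comp],
    by rw [cylIncl, prod.lift_fst_assoc, Category.id_comp]⟩

lemma SHomotopic.comp_left {u v : Q ⟶ K} (h : SHomotopic u v) (w : P ⟶ Q) :
    SHomotopic (w ≫ u) (w ≫ v) := by
  obtain ⟨H, rfl, rfl⟩ := h
  exact ⟨prod.map w (𝟙 Δ[1]) ≫ H,
    by rw [← Category.assoc, cylIncl_comp_prodMap, Category.assoc],
    by rw [← Category.assoc, cylIncl_comp_prodMap, Category.assoc]⟩

lemma SHomotopic.coprod_desc {u₁ v₁ : P ⟶ K} {u₂ v₂ : Q ⟶ K}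
    (h₁ : SHomotopic u₁ v₁) (h₂ : SHomotopic u₂ v₂) :
    SHomotopic (coprod.desc u₁ u₂) (coprod.desc v₁ v₂) := by
  obtain ⟨H₁, rfl, rfl⟩ := h₁
  obtain ⟨H₂, rfl, rfl⟩ := h₂
  let hc := isColimitBinaryCofanProdMap P Q Δ[1]
  let H : (P ⨿ Q) ⨯ Δ[1] ⟶ K := hc.desc (BinaryCofan.mk H₁ H₂)
  have hl : prod.map coprod.inl (𝟙 Δ[1]) ≫ H = H₁ := hc.fac _ ⟨.left⟩
  have hr : prod.map coprod.inr (𝟙 Δ[1]) ≫ H = H₂ := hc.fac _ ⟨.right⟩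
  refine ⟨H, ?_, ?_⟩ <;> ext1 <;>
    rw [← Category.assoc, ← cylIncl_comp_prodMap, Category.assoc] <;>
    simp only [hl, hr, coprod.inl_desc, coprod.inr_desc]

end Homotopy

section MapsToDiscrete

lemma stdSimplex_hom_disc_eq_const {R : Type} {n : ℕ} (φ : Δ[n] ⟶ disc R) :
    φ = const (Y := disc R) (SSet.yonedaEquiv (n := ⦋n⦌) φ) := by
  rw [← SSet.yonedaEquiv.symm_apply_apply φ]
  generalize SSet.yonedaEquiv φ = r
  rfl

lemma yonedaEquiv_comp_disc {R : Type} {m n : ℕ} (u : Δ[m] ⟶ Δ[n]) (φ : Δ[n] ⟶ disc R) :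
    SSet.yonedaEquiv (u ≫ φ) = SSet.yonedaEquiv φ := by
  rw [stdSimplex_hom_disc_eq_const φ]
  rfl

/-- All faces of a compatible family in `disc R` carry the same value, so a constant map fills
the horn. -/
lemma kanComplex_disc (R : Type) : KanComplex (disc R) := by
  rw [KanComplex.iff]
  intro n i f hf
  obtain ⟨j₀, hj₀⟩ : ∃ j, j ≠ i := ⟨i.succAbove 0, Fin.succAbove_ne i 0⟩
  suffices hval : ∀ j hj, SSet.yonedaEquiv (f j hj) = SSet.yonedaEquiv (f j₀ hj₀) from
    ⟨const (Y := disc R) (SSet.yonedaEquiv (n := ⦋n⦌) (f j₀ hj₀)), fun j hj =>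
      (congrArg (const (X := Δ[n])) (hval j hj)).symm.trans
        (stdSimplex_hom_disc_eq_const (f j hj)).symm⟩
  cases n with
  | zero =>
    intro j hj
    obtain rfl : j = j₀ := by omega
    rfl
  | succ n =>
    have hlt : ∀ j k hj hk, j < k → SSet.yonedaEquiv (f j hj) = SSet.yonedaEquiv (f k hk) := by
      intro j k hj hk hjk
      rw [← yonedaEquiv_comp_disc (stdSimplex.δ (k.pred (Fin.ne_zero_of_lt hjk))),
        ← yonedaEquiv_comp_disc (stdSimplex.δ (j.castPred (Fin.ne_last_of_lt hjk))) (f k hk),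
        hf j k hj hk hjk]
    intro j hj
    rcases lt_trichotomy j j₀ with h | rfl | h
    · exact hlt _ _ _ _ h
    · rfl
    · exact (hlt _ _ _ _ h).symm

/-- On the edge `{x} ⨯ Δ[1]` the homotopy is a map `Δ[1] ⟶ disc R`, hence constant. -/
lemma SHomotopic.app_eq_of_disc {R : Type} {P : SSet.{0}} {u v : P ⟶ disc R} (h : SHomotopic u v)
    (x : P _⦋0⦌) : u.app _ x = v.app _ x := by
  obtain ⟨H, rfl, rfl⟩ := h
  set G : Δ[1] ⟶ disc R := prod.lift (const x) (𝟙 Δ[1]) ≫ H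
  have hedge : ∀ k, const (X := Δ[0]) x ≫ cylIncl P k ≫ H = constMap Δ[0] k ≫ G := by
    intro k
    rw [← Category.assoc, ← Category.assoc (constMap _ _)]
    congr 1
    ext1 <;> simp [cylIncl, comp_constMap]
  have hx : const (X := Δ[0]) x ≫ cylIncl P 0 ≫ H = const x ≫ cylIncl P 1 ≫ H := by
    rw [hedge, hedge, stdSimplex_hom_disc_eq_const G]
    rfl
  have := congrArg (fun φ : Δ[0] ⟶ disc R => φ.app (op ⦋0⦌) (SSet.yonedaEquiv (𝟙 _))) hx
  simpa [const_comp] using this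

end MapsToDiscrete

section WeakEquiv

variable {A B A' B' : SSet.{0}}

lemma IsWeakEquiv.iso_comp {e : A ⟶ B} (h : IsWeakEquiv e) (σ : A' ⟶ A) [IsIso σ] :
    IsWeakEquiv (σ ≫ e) := by
  intro K hK
  obtain ⟨hsurj, hinj⟩ := h K hK
  refine ⟨fun u => ?_, fun v w hvw => hinj v w ?_⟩
  · obtain ⟨v, hv⟩ := hsurj (inv σ ≫ u)
    have := hv.comp_left σ
    rw [IsIso.hom_inv_id_assoc, ← Category.assoc] at this
    exact ⟨v, this⟩
  · have := hvw.comp_left (inv σ)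
    rwa [Category.assoc, Category.assoc, IsIso.inv_hom_id_assoc, IsIso.inv_hom_id_assoc] at this

lemma IsWeakEquiv.comp_iso {e : A ⟶ B} (h : IsWeakEquiv e) (ρ : B ⟶ B') [IsIso ρ] :
    IsWeakEquiv (e ≫ ρ) := by
  intro K hK
  obtain ⟨hsurj, hinj⟩ := h K hK
  refine ⟨fun u => ?_, fun v w hvw => ?_⟩
  · obtain ⟨v, hv⟩ := hsurj u
    exact ⟨inv ρ ≫ v, by rwa [Category.assoc, IsIso.hom_inv_id_assoc]⟩
  · rw [Category.assoc, Category.assoc] at hvw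
    have := (hinj _ _ hvw).comp_left (inv ρ)
    rwa [IsIso.inv_hom_id_assoc, IsIso.inv_hom_id_assoc] at this

lemma isWeakEquiv_iso_comp_iff (σ : A' ⟶ A) [IsIso σ] {e : A ⟶ B} :
    IsWeakEquiv (σ ≫ e) ↔ IsWeakEquiv e :=
  ⟨fun h => by simpa only [IsIso.inv_hom_id_assoc] using h.iso_comp (inv σ),
    fun h => h.iso_comp σ⟩

lemma IsWeakEquiv.coprod_map {e₁ : A ⟶ B} {e₂ : A' ⟶ B'} (h₁ : IsWeakEquiv e₁)
    (h₂ : IsWeakEquiv e₂) : IsWeakEquiv (coprod.map e₁ e₂) := by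
  intro K hK
  obtain ⟨hsurj₁, hinj₁⟩ := h₁ K hK
  obtain ⟨hsurj₂, hinj₂⟩ := h₂ K hK
  refine ⟨fun u => ?_, fun v w hvw => ?_⟩
  · obtain ⟨v₁, hv₁⟩ := hsurj₁ (coprod.inl ≫ u)
    obtain ⟨v₂, hv₂⟩ := hsurj₂ (coprod.inr ≫ u)
    refine ⟨coprod.desc v₁ v₂, ?_⟩
    rw [coprod.map_desc, ← coprod_desc_inl_comp_inr_comp u]
    exact hv₁.coprod_desc hv₂
  · have hinl := hvw.comp_left coprod.inl
    have hinr := hvw.comp_left coprod.inr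
    rw [← Category.assoc, ← Category.assoc, coprod.inl_map, Category.assoc, Category.assoc]
      at hinl
    rw [← Category.assoc, ← Category.assoc, coprod.inr_map, Category.assoc, Category.assoc]
      at hinr
    rw [← coprod_desc_inl_comp_inr_comp v, ← coprod_desc_inl_comp_inr_comp w]
    exact (hinj₁ _ _ hinl).coprod_desc (hinj₂ _ _ hinr)

lemma IsWeakEquiv.not_nonempty_of_coprod_map {e₁ : A ⟶ B} {e₂ : A' ⟶ B'}
    (h : IsWeakEquiv (coprod.map e₁ e₂)) (hA : ¬ A.Nonempty) : ¬ B.Nonempty := by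
  rintro ⟨b⟩
  let v : B ⨿ B' ⟶ disc Bool := coprod.desc (const false) (const true)
  let w : B ⨿ B' ⟶ disc Bool := coprod.desc (const true) (const true)
  have hvw : coprod.map e₁ e₂ ≫ v = coprod.map e₁ e₂ ≫ w := by
    rw [coprod.map_desc, coprod.map_desc, (isInitialOfNotNonempty hA).hom_ext (e₁ ≫ _)]
  have := ((h _ (kanComplex_disc Bool)).2 v w (hvw ▸ .refl _)).comp_left coprod.inl
  rw [coprod.inl_desc, coprod.inl_desc] at this
  exact Bool.false_ne_true (this.app_eq_of_disc b)

lemma IsWeakEquiv.of_coprod_map_left {e₁ : A ⟶ B} {e₂ : A' ⟶ B'}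
    (h : IsWeakEquiv (coprod.map e₁ e₂)) : IsWeakEquiv e₁ := by
  intro K hK
  obtain ⟨hsurj, hinj⟩ := h K hK
  by_cases hKne : K.Nonempty
  · obtain ⟨k⟩ := hKne
    refine ⟨fun u => ?_, fun v w hvw => ?_⟩
    · obtain ⟨v, hv⟩ := hsurj (coprod.desc u (const k))
      have := hv.comp_left coprod.inl
      rw [coprod.inl_desc, ← Category.assoc, coprod.inl_map, Category.assoc] at this
      exact ⟨_, this⟩
    · have := hinj (coprod.desc v (const k)) (coprod.desc w (const k)) (by
        rw [coprod.map_desc, coprod.map_desc]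
        exact hvw.coprod_desc (.refl _))
      have := this.comp_left coprod.inl
      rwa [coprod.inl_desc, coprod.inl_desc] at this
  · refine ⟨fun u => ?_, fun v w _ => ?_⟩
    · have hA : ¬ A.Nonempty := fun _ => hKne (nonempty_of_hom u)
      have hB := h.not_nonempty_of_coprod_map hA
      exact ⟨(isInitialOfNotNonempty hB).to K, (isInitialOfNotNonempty hA).hom_ext u _ ▸ .refl u⟩
    · have hB : ¬ B.Nonempty := fun _ => hKne (nonempty_of_hom v)
      exact (isInitialOfNotNonempty hB).hom_ext v w ▸ .refl v

lemma IsWeakEquiv.of_coprod_map_right {e₁ : A ⟶ B} {e₂ : A' ⟶ B'}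
    (h : IsWeakEquiv (coprod.map e₁ e₂)) : IsWeakEquiv e₂ := by
  have hswap : (coprod.braiding A' A).hom ≫ coprod.map e₁ e₂ ≫ (coprod.braiding B B').hom =
      coprod.map e₂ e₁ := by
    ext1 <;> simp only [coprod.braiding_hom, coprod.inl_desc_assoc, coprod.inr_desc_assoc,
      coprod.inl_map_assoc, coprod.inr_map_assoc, coprod.inl_desc, coprod.inr_desc, coprod.inl_map,
      coprod.inr_map]
  have := (h.comp_iso (coprod.braiding B B').hom).iso_comp (coprod.braiding A' A).hom
  rw [hswap] at this
  exact this.of_coprod_map_left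

lemma isWeakEquiv_coprod_map_iff {e₁ : A ⟶ B} {e₂ : A' ⟶ B'} :
    IsWeakEquiv (coprod.map e₁ e₂) ↔ IsWeakEquiv e₁ ∧ IsWeakEquiv e₂ :=
  ⟨fun h => ⟨h.of_coprod_map_left, h.of_coprod_map_right⟩, fun h => h.1.coprod_map h.2⟩

end WeakEquiv

section MapsFromDiscrete

def discMap {R S : Type} (φ : R → S) : disc R ⟶ disc S := (Functor.const _).map (↾φ)

def discLift {K : SSet.{0}} {R : Type} (c : R → K _⦋0⦌) : disc R ⟶ K where
  app m := ↾fun r => K.map (m.unop.const ⦋0⦌ 0).op (c r)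
  naturality _ _ _ := by
    ext
    dsimp
    rw [← CategoryTheory.comp_apply, ← Functor.map_comp]
    rfl

lemma discLift_app_zero {K : SSet.{0}} {R : Type} (c : R → K _⦋0⦌) (r : R) :
    (discLift c).app (op ⦋0⦌) r = c r := by
  change K.map (⦋0⦌.const ⦋0⦌ 0).op (c r) = c r
  rw [← SimplexCategory.eq_const_to_zero (𝟙 _), op_id, Functor.map_id_apply]

lemma disc_hom_ext {K : SSet.{0}} {R : Type} {u v : disc R ⟶ K}
    (h : ∀ r : R, u.app (op ⦋0⦌) r = v.app (op ⦋0⦌) r) : u = v := by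
  ext m r
  have hu := NatTrans.naturality_apply u (m.unop.const ⦋0⦌ 0).op r
  have hv := NatTrans.naturality_apply v (m.unop.const ⦋0⦌ 0).op r
  exact hu.trans ((congrArg _ (h r)).trans hv.symm)

lemma isIso_coprod_desc_discMap {R₁ R₂ R : Type} (φ₁ : R₁ → R) (φ₂ : R₂ → R)
    (h : Function.Bijective (Sum.elim φ₁ φ₂)) : IsIso (coprod.desc (discMap φ₁) (discMap φ₂)) := by
  suffices ∀ m, IsIso ((coprod.desc (discMap φ₁) (discMap φ₂)).app m) from
    NatIso.isIso_of_isIso_app _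
  intro m
  let E := FunctorToTypes.binaryCoproductEquiv (disc R₁) (disc R₂) m
  have hE : (⇑((coprod.desc (discMap φ₁) (discMap φ₂)).app m) ∘ E.symm : R₁ ⊕ R₂ → R) =
      Sum.elim φ₁ φ₂ := by
    funext y
    cases y with
    | inl x =>
      change (coprod.inl ≫ coprod.desc (discMap φ₁) (discMap φ₂)).app m x = φ₁ x
      rw [coprod.inl_desc]
      rfl
    | inr x =>
      change (coprod.inr ≫ coprod.desc (discMap φ₁) (discMap φ₂)).app m x = φ₂ x
      rw [coprod.inr_desc]
      rfl
  rw [isIso_iff_bijective, ← Equiv.bijective_comp E.symm]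
  exact (congrArg Function.Bijective hE).mpr h

lemma exists_discMap_split {Y W : SSet.{0}} {R : Type} (h : disc R ⟶ Y ⨿ W) :
    ∃ (R₁ R₂ : Type) (φ₁ : R₁ → R) (φ₂ : R₂ → R) (g₁ : disc R₁ ⟶ Y) (g₂ : disc R₂ ⟶ W),
      Function.Bijective (Sum.elim φ₁ φ₂) ∧
        coprod.desc (discMap φ₁) (discMap φ₂) ≫ h = coprod.map g₁ g₂ := by
  classical
  let E := FunctorToTypes.binaryCoproductEquiv Y W (op ⦋0⦌)
  let s : R → Y _⦋0⦌ ⊕ W _⦋0⦌ := fun r => E (h.app _ r)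
  refine ⟨{r // (s r).isLeft}, {r // ¬ (s r).isLeft}, Subtype.val, Subtype.val,
    discLift fun r => (s r.1).getLeft r.2,
    discLift fun r => (s r.1).getRight (Sum.not_isLeft.mp r.2), (Equiv.sumCompl _).bijective, ?_⟩
  ext1
  · rw [coprod.inl_desc_assoc, coprod.inl_map]
    refine disc_hom_ext fun r => E.injective ?_
    change s r.1 = E ((coprod.inl : Y ⟶ Y ⨿ W).app _ ((discLift _).app _ r))
    rw [discLift_app_zero]
    simp [E]
  · rw [coprod.inr_desc_assoc, coprod.inr_map]
    refine disc_hom_ext fun r => E.injective ?_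
    change s r.1 = E ((coprod.inr : W ⟶ Y ⨿ W).app _ ((discLift _).app _ r))
    rw [discLift_app_zero]
    simp [E]

end MapsFromDiscrete

section ExtensionBySet

variable {X Y Z W : SSet.{0}}

lemma isWeakEquiv_coprod_desc_map_map_iff {D E : SSet.{0}} (f : X ⟶ Y) (g : Z ⟶ W)
    (f' : D ⟶ Y) (g' : E ⟶ W) :
    IsWeakEquiv (coprod.desc (coprod.map f g) (coprod.map f' g')) ↔
      IsWeakEquiv (coprod.desc f f') ∧ IsWeakEquiv (coprod.desc g g') := by
  rw [coprod_desc_map_map, isWeakEquiv_iso_comp_iff, isWeakEquiv_coprod_map_iff]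

lemma isWeakEquiv_coprod_desc_map_iff_of_split (f : X ⟶ Y) (g : Z ⟶ W) {R R₁ R₂ : Type}
    {φ₁ : R₁ → R} {φ₂ : R₂ → R} (hφ : Function.Bijective (Sum.elim φ₁ φ₂))
    {h : disc R ⟶ Y ⨿ W} {g₁ : disc R₁ ⟶ Y} {g₂ : disc R₂ ⟶ W}
    (hsplit : coprod.desc (discMap φ₁) (discMap φ₂) ≫ h = coprod.map g₁ g₂) :
    IsWeakEquiv (coprod.desc (coprod.map f g) h) ↔
      IsWeakEquiv (coprod.desc f g₁) ∧ IsWeakEquiv (coprod.desc g g₂) := by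
  have := isIso_coprod_desc_discMap φ₁ φ₂ hφ
  rw [← isWeakEquiv_iso_comp_iff (coprod.map (𝟙 _) (coprod.desc (discMap φ₁) (discMap φ₂))),
    coprod.map_desc, Category.id_comp, hsplit, isWeakEquiv_coprod_desc_map_map_iff]

end ExtensionBySet

theorem stmt2_general {X Y Z W : SSet.{0}} (f : X ⟶ Y) (g : Z ⟶ W) :
    IsExtensionBySet (coprod.map f g) ↔ (IsExtensionBySet f ∧ IsExtensionBySet g) := by
  constructor
  · rintro ⟨R, h, hw⟩
    obtain ⟨R₁, R₂, φ₁, φ₂, g₁, g₂, hφ, hsplit⟩ := exists_discMap_split h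
    rw [isWeakEquiv_coprod_desc_map_iff_of_split f g hφ hsplit] at hw
    exact ⟨⟨R₁, g₁, hw.1⟩, ⟨R₂, g₂, hw.2⟩⟩
  · rintro ⟨⟨R₁, g₁, h₁⟩, ⟨R₂, g₂, h₂⟩⟩
    have hφ : Function.Bijective (Sum.elim (Sum.inl : R₁ → R₁ ⊕ R₂) Sum.inr) := by
      rw [Sum.elim_inl_inr]
      exact Function.bijective_id
    have := isIso_coprod_desc_discMap _ _ hφ
    refine ⟨R₁ ⊕ R₂, inv (coprod.desc (discMap Sum.inl) (discMap Sum.inr)) ≫ coprod.map g₁ g₂, ?_⟩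
    rw [isWeakEquiv_coprod_desc_map_iff_of_split f g hφ (IsIso.hom_inv_id_assoc _ _)]
    exact ⟨h₁, h₂⟩

/-- a disjoint union of monomorphisms is an extension by a set iff
both summands are. -/
theorem stmt2 {X Y Z W : SSet.{0}} (f : X ⟶ Y) (g : Z ⟶ W)
    (hf : Mono f) (hg : Mono g) :
    IsExtensionBySet (coprod.map f g) ↔ (IsExtensionBySet f ∧ IsExtensionBySet g) :=
  stmt2_general f g

end Paper
end
end

section
/- Let i ⊣ r be an adjunction where i is fully faithful, and suppose i is both a left and a right Quillen equivalence between model categories M (on the domain of i) and N (on the codomain). Then the model structure on M is both left-induced and right-induced from N along i: the cofibrations and weak equivalences of M are exactly the maps whose images under i are cofibrations and weak equivalences in N, and likewise fibrations and weak equivalences are created by i. -/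
open CategoryTheory CategoryTheory.Limits Simplicial

noncomputable section

namespace Paper

section Model

universe v u v' u'

variable {C : Type u} [Category.{v} C]

/-- `f` is a retract of `g` in the arrow category. -/
def IsRetractOf {A B A' B' : C} (f : A ⟶ B) (g : A' ⟶ B') : Prop :=
  ∃ (i : A ⟶ A') (r : A' ⟶ A) (j : B ⟶ B') (s : B' ⟶ B),
    i ≫ r = 𝟙 A ∧ j ≫ s = 𝟙 B ∧ i ≫ g = f ≫ j ∧ g ≫ s = r ≫ f

/-- A (Quillen) model structure on a category: weak equivalences, cofibrations and
fibrations, satisfying two-out-of-three, retract closure, lifting and factorization. -/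
structure ModelStructure (C : Type u) [Category.{v} C] where
  W : MorphismProperty C
  Cof : MorphismProperty C
  Fib : MorphismProperty C
  w_id : ∀ X : C, W (𝟙 X)
  w_comp : ∀ {X Y Z : C} (f : X ⟶ Y) (g : Y ⟶ Z), W f → W g → W (f ≫ g)
  w_two_of_three_left : ∀ {X Y Z : C} (f : X ⟶ Y) (g : Y ⟶ Z), W g → W (f ≫ g) → W f
  w_two_of_three_right : ∀ {X Y Z : C} (f : X ⟶ Y) (g : Y ⟶ Z), W f → W (f ≫ g) → W g
  w_retract : ∀ {A B A' B' : C} (f : A ⟶ B) (g : A' ⟶ B'), IsRetractOf f g → W g → W f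
  cof_retract : ∀ {A B A' B' : C} (f : A ⟶ B) (g : A' ⟶ B'), IsRetractOf f g → Cof g → Cof f
  fib_retract : ∀ {A B A' B' : C} (f : A ⟶ B) (g : A' ⟶ B'), IsRetractOf f g → Fib g → Fib f
  lift_trivCof_fib : ∀ {A B X Y : C} (i : A ⟶ B) (p : X ⟶ Y),
    Cof i → W i → Fib p → HasLiftingProperty i p
  lift_cof_trivFib : ∀ {A B X Y : C} (i : A ⟶ B) (p : X ⟶ Y),
    Cof i → Fib p → W p → HasLiftingProperty i p
  fact_cof_trivFib : ∀ {X Y : C} (f : X ⟶ Y), ∃ (Z : C) (i : X ⟶ Z) (p : Z ⟶ Y),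
    Cof i ∧ Fib p ∧ W p ∧ i ≫ p = f
  fact_trivCof_fib : ∀ {X Y : C} (f : X ⟶ Y), ∃ (Z : C) (i : X ⟶ Z) (p : Z ⟶ Y),
    Cof i ∧ W i ∧ Fib p ∧ i ≫ p = f

variable {D : Type u'} [Category.{v'} D]

/-- A left Quillen functor: preserves cofibrations and trivial cofibrations. -/
def LeftQuillen (M : ModelStructure C) (N : ModelStructure D) (F : C ⥤ D) : Prop :=
  (∀ {A B : C} (f : A ⟶ B), M.Cof f → N.Cof (F.map f)) ∧
  (∀ {A B : C} (f : A ⟶ B), M.Cof f → M.W f → N.Cof (F.map f) ∧ N.W (F.map f))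

/-- A right Quillen functor: preserves fibrations and trivial fibrations. -/
def RightQuillen (M : ModelStructure C) (N : ModelStructure D) (G : C ⥤ D) : Prop :=
  (∀ {A B : C} (f : A ⟶ B), M.Fib f → N.Fib (G.map f)) ∧
  (∀ {A B : C} (f : A ⟶ B), M.Fib f → M.W f → N.Fib (G.map f) ∧ N.W (G.map f))

/-- Cofibrant object. -/
def IsCofibrant [Limits.HasInitial C] (M : ModelStructure C) (X : C) : Prop :=
  M.Cof (Limits.initial.to X)

/-- Fibrant object. -/
def IsFibrant [Limits.HasTerminal C] (M : ModelStructure C) (X : C) : Prop :=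
  M.Fib (Limits.terminal.from X)

/-- The Quillen-equivalence condition for an adjunction `F ⊣ G`: for a cofibrant `A`
and a fibrant `X`, a map `F A ⟶ X` is a weak equivalence iff its adjoint is. -/
def QuillenEquivCondition [Limits.HasInitial C] [Limits.HasTerminal D]
    (M : ModelStructure C) (N : ModelStructure D)
    (F : C ⥤ D) (G : D ⥤ C) (adj : F ⊣ G) : Prop :=
  ∀ (A : C) (X : D), IsCofibrant M A → IsFibrant N X →
    ∀ f : F.obj A ⟶ X, (N.W f ↔ M.W (adj.homEquiv A X f))

end Model

/-! Being both left and right Quillen, `i` preserves trivial cofibrations and trivial fibrations,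
hence all weak equivalences (factor a weak equivalence as a cofibration followed by a trivial
fibration). Since `i` is fully faithful, lifting problems against images under `i` can be solved
in the domain, so by the retract argument `i` also reflects cofibrations and fibrations.

For weak equivalences, choose a fibrant replacement `j : i B ⟶ X` in `N` and let `θ : B ⟶ r X`
be its adjoint. For cofibrant `Q` and `p : Q ⟶ B`, the adjoint of `i p ≫ j` is `p ≫ θ`, so the
Quillen-equivalence condition turns `W (i p)` into `W (p ≫ θ)`. Applied to a cofibrant
replacement of `B` this shows that `θ` is a weak equivalence, and applied to `pA ≫ f`, with
`pA` a cofibrant replacement of `A`, it shows that `f` is one whenever `i f` is. -/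

section Lifting

variable {C : Type*} [Category C] {D : Type*} [Category D]

lemma isRetractOf_of_retractArrow {X Y Z W : C} {f : X ⟶ Y} {g : Z ⟶ W}
    (h : RetractArrow f g) : IsRetractOf f g :=
  ⟨h.i.left, h.r.left, h.i.right, h.r.right, h.retract_left, h.retract_right, h.i_w, h.r_w.symm⟩

lemma hasLiftingProperty_of_map (F : C ⥤ D) [F.Full] [F.Faithful] {A B X Y : C}
    {i : A ⟶ B} {p : X ⟶ Y} [HasLiftingProperty (F.map i) (F.map p)] :
    HasLiftingProperty i p where
  sq_hasLift {f g} sq := by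
    let l := F.preimage (sq.map F).lift
    exact ⟨⟨{ l := l
              fac_left := F.map_injective (by simp [l])
              fac_right := F.map_injective (by simp [l]) }⟩⟩

end Lifting

namespace ModelStructure

variable {C : Type*} [Category C] (M : ModelStructure C)

lemma cof_of_hasLiftingProperty {A B : C} {f : A ⟶ B}
    (hf : ∀ {X Y : C} (p : X ⟶ Y), M.Fib p → M.W p → HasLiftingProperty f p) : M.Cof f := by
  obtain ⟨Z, c, p, hc, hp, hpW, hfac⟩ := M.fact_cof_trivFib f
  have := hf p hp hpW
  exact M.cof_retract f c (isRetractOf_of_retractArrow (.ofLeftLiftingProperty hfac)) hc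

lemma fib_of_hasLiftingProperty {A B : C} {f : A ⟶ B}
    (hf : ∀ {X Y : C} (c : X ⟶ Y), M.Cof c → M.W c → HasLiftingProperty c f) : M.Fib f := by
  obtain ⟨Z, c, p, hc, hcW, hp, hfac⟩ := M.fact_trivCof_fib f
  have := hf c hc hcW
  exact M.fib_retract f p (isRetractOf_of_retractArrow (.ofRightLiftingProperty hfac)) hp

lemma exists_cofibrant_replacement [HasInitial C] (A : C) :
    ∃ (Q : C) (p : Q ⟶ A), IsCofibrant M Q ∧ M.W p := by
  obtain ⟨Q, c, p, hc, -, hp, -⟩ := M.fact_cof_trivFib (initial.to A)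
  exact ⟨Q, p, by rwa [IsCofibrant, Subsingleton.elim (initial.to Q) c], hp⟩

lemma exists_fibrant_replacement [HasTerminal C] (X : C) :
    ∃ (R : C) (j : X ⟶ R), IsFibrant M R ∧ M.W j := by
  obtain ⟨R, j, p, -, hj, hp, -⟩ := M.fact_trivCof_fib (terminal.from X)
  exact ⟨R, j, by rwa [IsFibrant, Subsingleton.elim (terminal.from R) p], hj⟩

end ModelStructure

section Quillen

variable {C : Type*} [Category C] {D : Type*} [Category D]
  {M : ModelStructure C} {N : ModelStructure D} {F : C ⥤ D}

lemma map_w_of_leftQuillen_of_rightQuillen (hL : LeftQuillen M N F) (hR : RightQuillen M N F)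
    {A B : C} {f : A ⟶ B} (hf : M.W f) : N.W (F.map f) := by
  obtain ⟨Z, c, p, hc, hp, hpW, rfl⟩ := M.fact_cof_trivFib f
  have hcW : M.W c := M.w_two_of_three_left c p hpW hf
  rw [F.map_comp]
  exact N.w_comp _ _ (hL.2 c hc hcW).2 (hR.2 p hp hpW).2

lemma cof_of_map_cof [F.Full] [F.Faithful] (hR : RightQuillen M N F) {A B : C} {f : A ⟶ B}
    (hf : N.Cof (F.map f)) : M.Cof f :=
  M.cof_of_hasLiftingProperty fun p hp hpW ↦
    have := N.lift_cof_trivFib _ _ hf (hR.2 p hp hpW).1 (hR.2 p hp hpW).2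
    hasLiftingProperty_of_map F

lemma fib_of_map_fib [F.Full] [F.Faithful] (hL : LeftQuillen M N F) {A B : C} {f : A ⟶ B}
    (hf : N.Fib (F.map f)) : M.Fib f :=
  M.fib_of_hasLiftingProperty fun c hc hcW ↦
    have := N.lift_trivCof_fib _ _ (hL.2 c hc hcW).1 (hL.2 c hc hcW).2 hf
    hasLiftingProperty_of_map F

lemma QuillenEquivCondition.w_of_map_w [HasInitial C] [HasTerminal D] {G : D ⥤ C}
    {adj : F ⊣ G} (h : QuillenEquivCondition M N F G adj)
    (hF : ∀ {A B : C} (f : A ⟶ B), M.W f → N.W (F.map f))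
    {A B : C} {f : A ⟶ B} (hf : N.W (F.map f)) : M.W f := by
  obtain ⟨X, j, hX, hj⟩ := N.exists_fibrant_replacement (F.obj B)
  let θ := adj.homEquiv B X j
  have key : ∀ {Q : C} (p : Q ⟶ B), IsCofibrant M Q → N.W (F.map p) → M.W (p ≫ θ) := by
    intro Q p hQ hp
    rw [← adj.homEquiv_naturality_left]
    exact (h Q X hQ hX _).mp (N.w_comp _ _ hp hj)
  obtain ⟨QB, pB, hQB, hpB⟩ := M.exists_cofibrant_replacement B
  have hθ : M.W θ := M.w_two_of_three_right pB θ hpB (key pB hQB (hF pB hpB))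
  obtain ⟨QA, pA, hQA, hpA⟩ := M.exists_cofibrant_replacement A
  have hpAf : M.W (pA ≫ f) := by
    refine M.w_two_of_three_left _ θ hθ ?_
    refine key (pA ≫ f) hQA ?_
    rw [F.map_comp]
    exact N.w_comp _ _ (hF pA hpA) hf
  exact M.w_two_of_three_right pA f hpA hpAf

end Quillen

theorem stmt16_general {C : Type u} {D : Type u'} [Category.{v} C] [Category.{v'} D]
    [Limits.HasInitial C]
    [Limits.HasTerminal D]
    (M : ModelStructure C) (N : ModelStructure D)
    (i : C ⥤ D) (r : D ⥤ C)
    [i.Full] [i.Faithful]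
    (adj_ir : i ⊣ r)
    (hiLQ : LeftQuillen M N i)
    (hiLQE : QuillenEquivCondition M N i r adj_ir)
    (hiRQ : RightQuillen M N i) :
    ∀ {A B : C} (f : A ⟶ B),
      (M.Cof f ↔ N.Cof (i.map f)) ∧
      (M.W f ↔ N.W (i.map f)) ∧
      (M.Fib f ↔ N.Fib (i.map f)) := by
  have map_w {A B : C} (f : A ⟶ B) : M.W f → N.W (i.map f) :=
    map_w_of_leftQuillen_of_rightQuillen hiLQ hiRQ
  intro A B f
  exact ⟨⟨hiLQ.1 f, cof_of_map_cof hiRQ⟩,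
    ⟨map_w f, hiLQE.w_of_map_w map_w⟩,
    ⟨hiRQ.1 f, fib_of_map_fib hiLQ⟩⟩

/-- if `i` is fully faithful with adjunctions `l ⊣ i` and `i ⊣ r`,
and `i` is both a left Quillen equivalence (with right adjoint `r`) and a right
Quillen equivalence (with left adjoint `l`), then the model structure on its
domain is both left- and right-induced: `i` creates cofibrations, fibrations
and weak equivalences. -/
theorem stmt16 {C : Type u} {D : Type u'} [Category.{v} C] [Category.{v'} D]
    [Limits.HasInitial C] [Limits.HasTerminal C]
    [Limits.HasInitial D] [Limits.HasTerminal D]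
    (M : ModelStructure C) (N : ModelStructure D)
    (i : C ⥤ D) (r : D ⥤ C) (l : D ⥤ C)
    [i.Full] [i.Faithful]
    (adj_ir : i ⊣ r) (adj_li : l ⊣ i)
    (hiLQ : LeftQuillen M N i)
    (hiLQE : QuillenEquivCondition M N i r adj_ir)
    (hiRQ : RightQuillen M N i)
    (hlLQ : LeftQuillen N M l)
    (hlLQE : QuillenEquivCondition N M l i adj_li) :
    ∀ {A B : C} (f : A ⟶ B),
      (M.Cof f ↔ N.Cof (i.map f)) ∧
      (M.W f ↔ N.W (i.map f)) ∧
      (M.Fib f ↔ N.Fib (i.map f)) :=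
  stmt16_general M N i r adj_ir hiLQ hiLQE hiRQ

end Paper
end
end
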